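/- Let d be a natural number, c a real number, and k' a positive integer. Then Σ_{k=1}^∞ (1/k) · ∫₀¹ ∫₀¹ x^k y^{k'} (x·y + c)^d dx dy = Σ_{i=0}^{d} C(d, i) · c^{d−i} · H_{i+1} / ( (i+1)·(k'+i+1) ), with the left-hand series converging, where C(d,i) is the binomial coefficient and H_n = Σ_{j=1}^{n} 1/j is the n-th harmonic number. -/

import Mathlib

/-!
Expanding `(xy + c)^d` binomially, the double integral is
`∑ᵢ C(d,i) c^{d-i} / ((k+i+2)(k'+i+1))`, so exchanging the finite and the infinite sum leaves,
for each `i`, the series `∑ₖ 1/((k+1)(k+i+2))`. Since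
`1/((k+1)(k+i+2)) = (1/(i+1)) (1/(k+1) - 1/(k+i+2))`, it telescopes to `H_{i+1}/(i+1)`.
-/

open Finset Filter Topology

theorem hasSum_one_div_succ_mul_add_two (i : ℕ) :
    HasSum (fun k : ℕ => 1 / (((k : ℝ) + 1) * ((k : ℝ) + i + 2)))
      ((∑ j ∈ range (i + 1), 1 / ((j : ℝ) + 1)) / (i + 1)) := by
  set g : ℕ → ℝ := fun k => (∑ j ∈ range (i + 1), 1 / ((k : ℝ) + j + 1)) / (i + 1) with hg
  have hterm (k : ℕ) : 1 / (((k : ℝ) + 1) * ((k : ℝ) + i + 2)) = g k - g (k + 1) := by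
    have hshift (j : ℕ) : (1 : ℝ) / (k + 1 + j + 1) = 1 / (k + (j + 1 : ℕ) + 1) := by
      push_cast; ring_nf
    simp only [hg, ← sub_div, Nat.cast_add_one]
    simp only [hshift]
    rw [← sum_sub_distrib, sum_range_sub' (fun j : ℕ => 1 / ((k : ℝ) + j + 1))]
    push_cast
    field_simp
    ring
  have hg_tendsto : Tendsto g atTop (𝓝 0) := by
    have hinv (j : ℕ) : Tendsto (fun k : ℕ => 1 / ((k : ℝ) + j + 1)) atTop (𝓝 0) := by
      have := (tendsto_one_div_add_atTop_nhds_zero_nat (𝕜 := ℝ)).comp (tendsto_add_atTop_nat j)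
      simpa [Function.comp_def] using this
    simpa [g] using (tendsto_finsetSum (range (i + 1)) fun j _ => hinv j).div_const ((i : ℝ) + 1)
  rw [hasSum_iff_tendsto_nat_of_nonneg fun k => by positivity]
  simp_rw [hterm, sum_range_sub']
  simpa [g] using (tendsto_const_nhds (x := g 0)).sub hg_tendsto

theorem integral_sum_mul_pow {ι : Type*} (s : Finset ι) (a : ι → ℝ) (p : ι → ℕ) :
    ∫ x in (0 : ℝ)..1, ∑ i ∈ s, a i * x ^ p i = ∑ i ∈ s, a i / (p i + 1) := by
  rw [intervalIntegral.integral_finsetSum fun i _ => by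
    apply Continuous.intervalIntegrable; fun_prop]
  refine sum_congr rfl fun i _ => ?_
  simp [integral_pow, div_eq_mul_inv]

theorem integral_integral_pow_mul_pow_mul_add_pow (d m n : ℕ) (c : ℝ) :
    ∫ y in (0 : ℝ)..1, ∫ x in (0 : ℝ)..1, x ^ m * y ^ n * (x * y + c) ^ d =
      ∑ i ∈ range (d + 1), d.choose i * c ^ (d - i) / ((m + i + 1) * (n + i + 1)) := by
  have hexpand (x y : ℝ) : x ^ m * y ^ n * (x * y + c) ^ d =
      ∑ i ∈ range (d + 1), (d.choose i * c ^ (d - i) * y ^ (n + i)) * x ^ (m + i) := by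
    rw [add_pow, mul_sum]
    exact sum_congr rfl fun i _ => by ring
  simp_rw [hexpand, integral_sum_mul_pow, mul_div_right_comm _ (_ ^ _), integral_sum_mul_pow]
  push_cast
  exact sum_congr rfl fun i _ => by field_simp

theorem polynomial_kernel_tsum_moment_integral_general (d : ℕ) (c : ℝ) (k' : ℕ) :
    Summable (fun k : ℕ => (1 / ((k : ℝ) + 1)) *
      ∫ y in (0 : ℝ)..1, ∫ x in (0 : ℝ)..1, x ^ (k + 1) * y ^ k' * (x * y + c) ^ d) ∧
    ∑' k : ℕ, (1 / ((k : ℝ) + 1)) *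
      ∫ y in (0 : ℝ)..1, ∫ x in (0 : ℝ)..1, x ^ (k + 1) * y ^ k' * (x * y + c) ^ d =
      ∑ i ∈ Finset.range (d + 1),
        (d.choose i : ℝ) * c ^ (d - i) * (∑ j ∈ Finset.range (i + 1), 1 / ((j : ℝ) + 1)) /
          (((i : ℝ) + 1) * ((k' : ℝ) + (i : ℝ) + 1)) := by
  have hterm (k : ℕ) : (1 / ((k : ℝ) + 1)) *
      ∫ y in (0 : ℝ)..1, ∫ x in (0 : ℝ)..1, x ^ (k + 1) * y ^ k' * (x * y + c) ^ d =
      ∑ i ∈ range (d + 1), d.choose i * c ^ (d - i) / (k' + i + 1) *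
        (1 / ((k + 1) * (k + i + 2))) := by
    rw [integral_integral_pow_mul_pow_mul_add_pow, mul_sum]
    push_cast
    exact sum_congr rfl fun i _ => by field_simp; ring
  have hsum := hasSum_sum fun i (_ : i ∈ range (d + 1)) =>
    (hasSum_one_div_succ_mul_add_two i).mul_left (d.choose i * c ^ (d - i) / (k' + i + 1))
  simp_rw [← hterm] at hsum
  refine ⟨hsum.summable, hsum.tsum_eq.trans (sum_congr rfl fun i _ => ?_)⟩
  field_simp

/-- Kernel covariance between the infinite weighted sum of raw moments and the `k'`-th
raw-moment observation under the polynomial kernel: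
`∑_{k ≥ 1} (1/k) ∫₀¹∫₀¹ x^k y^{k'} (xy+c)^d dx dy
  = ∑_{i=0}^d C(d,i) c^{d-i} H_{i+1} / ((i+1)(k'+i+1))`. -/
theorem polynomial_kernel_tsum_moment_integral (d : ℕ) (c : ℝ) (k' : ℕ) (hk' : 0 < k') :
    Summable (fun k : ℕ => (1 / ((k : ℝ) + 1)) *
      ∫ y in (0 : ℝ)..1, ∫ x in (0 : ℝ)..1, x ^ (k + 1) * y ^ k' * (x * y + c) ^ d) ∧
    ∑' k : ℕ, (1 / ((k : ℝ) + 1)) *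
      ∫ y in (0 : ℝ)..1, ∫ x in (0 : ℝ)..1, x ^ (k + 1) * y ^ k' * (x * y + c) ^ d =
      ∑ i ∈ Finset.range (d + 1),
        (d.choose i : ℝ) * c ^ (d - i) * (∑ j ∈ Finset.range (i + 1), 1 / ((j : ℝ) + 1)) /
          (((i : ℝ) + 1) * ((k' : ℝ) + (i : ℝ) + 1)) :=
  polynomial_kernel_tsum_moment_integral_general d c k'
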